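/- Let s ≥ 1, γ > 0, and let μ : ℝ^d → ℝ^d have all components in B^{s−1}(ℝ^d). If v ∈ B^s(ℝ^d) satisfies γv − Δv + μ·∇v = 0 on ℝ^d — equivalently, (γ + |ξ|²) v̂(ξ) + (μ·∇v)^(ξ) = 0 for a.e. ξ ∈ ℝ^d — then v is identically zero. -/

import Mathlib

open MeasureTheory Complex Filter

noncomputable section

/-- Euclidean space `ℝ^d`. -/
abbrev Ed (d : ℕ) := EuclideanSpace ℝ (Fin d)

/-- The spectral Barron norm of a Fourier representative `F`. -/
def barronNorm (d : ℕ) (s : ℝ) (F : Ed d → ℂ) : ℝ :=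
  ∫ ξ, ‖F ξ‖ * (1 + ‖ξ‖) ^ s

/-- `F` is an (L¹) Fourier representative of `f` with finite spectral Barron norm of order `s`,
i.e. `f` lies in the spectral Barron space `B^s(ℝ^d)` with Fourier transform `F`. -/
structure BarronRep (d : ℕ) (s : ℝ) (f : Ed d → ℝ) (F : Ed d → ℂ) : Prop where
  intF : Integrable F
  intW : Integrable fun ξ => ‖F ξ‖ * (1 + ‖ξ‖) ^ s
  repr : ∀ x : Ed d, (f x : ℂ) = ∫ ξ, F ξ * Complex.exp (Complex.I * Complex.ofReal (inner ℝ x ξ))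

/-- Membership in the spectral Barron space `B^s(ℝ^d)`. -/
def MemBarron (d : ℕ) (s : ℝ) (f : Ed d → ℝ) : Prop := ∃ F, BarronRep d s f F

/-- Partial derivative in the `i`-th coordinate direction. -/
def pd (d : ℕ) (f : Ed d → ℝ) (i : Fin d) (x : Ed d) : ℝ :=
  fderiv ℝ f x (EuclideanSpace.single i 1)

/-- The Laplacian. -/
def lap (d : ℕ) (V : Ed d → ℝ) (x : Ed d) : ℝ :=
  ∑ i : Fin d, iteratedFDeriv ℝ 2 V x ![EuclideanSpace.single i 1, EuclideanSpace.single i 1]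

/-- Squared Sobolev `H^k(K)` norm (derivatives measured with iterated Fréchet derivatives). -/
def sobNormSq (d k : ℕ) (K : Set (Ed d)) (f : Ed d → ℝ) : ℝ :=
  ∑ m ∈ Finset.range (k + 1), ∫ x in K, ‖iteratedFDeriv ℝ m f x‖ ^ 2

/-- A cosine-activated two-layer neural network with `n` hidden neurons. -/
def twoLayerCos (d n : ℕ) (a : Fin n → ℝ) (w : Fin n → Ed d) (b : Fin n → ℝ) (x : Ed d) : ℝ :=
  (1 / (n : ℝ)) * ∑ j, a j * Real.cos (inner ℝ (w j) x + b j)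

/-- Fourier transform of `μ·∇v`, expressed via representatives: the convolution
`Σᵢ μ̂ᵢ ⋆ (iξᵢ v̂)`. -/
def muGradHat (d : ℕ) (M : Fin d → Ed d → ℂ) (Fv : Ed d → ℂ) (ξ : Ed d) : ℂ :=
  ∑ i : Fin d, ∫ η, M i (ξ - η) * (Complex.I * (η i : ℂ) * Fv η)

/-!
A maximum principle, run on the Fourier side. The function `v` is continuous and vanishes at
infinity (Riemann–Lebesgue), so if it were positive somewhere it would attain a positive global
maximum at some `x₀`. Integrating the equation against `e^{i x₀·ξ}` turns the convolution into a
product and gives `γ v(x₀) - Δv(x₀) + μ(x₀)·∇v(x₀) = 0`; the first and second derivative tests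
along lines through `x₀` give `∇v(x₀) = 0` and `Δv(x₀) ≤ 0`, hence `v(x₀) ≤ 0`, a contradiction.
Applying this to `-v` gives `v = 0`. The second derivatives are available because the equation
itself makes `|ξ|² v̂ = -γ v̂ - (μ·∇v)^` integrable.
-/

open Topology FourierTransform
open scoped RealInnerProductSpace Convolution

theorem IsLocalMax.hasDerivAt_deriv_nonpos {g g' : ℝ → ℝ} {a q : ℝ} (hmax : IsLocalMax g a)
    (hg : ∀ᶠ t in 𝓝 a, HasDerivAt g (g' t) t) (hg' : HasDerivAt g' q a) : q ≤ 0 := by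
  by_contra! hq
  have hcrit : g' a = 0 := hmax.hasDerivAt_eq_zero hg.self_of_nhds
  have hslope : ∀ᶠ t in 𝓝[>] a, 0 < slope g' a t :=
    ((hasDerivAt_iff_tendsto_slope.mp hg').mono_left
      (nhdsWithin_mono _ fun t ht => ne_of_gt ht)).eventually_const_lt hq
  obtain ⟨u, hau, hu⟩ := mem_nhdsGT_iff_exists_Ioo_subset.mp
    (hslope.and ((hmax.filter_mono nhdsWithin_le_nhds).and (hg.filter_mono nhdsWithin_le_nhds)))
  set b := (a + u) / 2
  have hab : a < b := by simp only [b]; linarith [hau.out]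
  have hbu : b < u := by simp only [b]; linarith [hau.out]
  have hderiv : ∀ t ∈ Set.Icc a b, HasDerivAt g (g' t) t := by
    rintro t ⟨hat, htb⟩
    rcases hat.eq_or_lt with rfl | hat
    · exact hg.self_of_nhds
    · exact (hu ⟨hat, htb.trans_lt hbu⟩).2.2
  obtain ⟨c, hc, hgc⟩ := exists_hasDerivAt_eq_slope g g' hab
    (fun t ht => (hderiv t ht).continuousAt.continuousWithinAt)
    (fun t ht => hderiv t (Set.Ioo_subset_Icc_self ht))
  have hpos : 0 < g' c := by
    have h := (hu ⟨hc.1, hc.2.trans hbu⟩).1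
    rw [slope_def_field, hcrit, sub_zero] at h
    exact (div_pos_iff_of_pos_right (sub_pos.mpr hc.1)).mp h
  have hle : (g b - g a) / (b - a) ≤ 0 :=
    div_nonpos_of_nonpos_of_nonneg (sub_nonpos.mpr (hu ⟨hab, hbu⟩).2.1) (sub_pos.mpr hab).le
  linarith

theorem IsLocalMax.isLocalMax_add_smul {E β : Type*} [AddCommGroup E] [Module ℝ E]
    [TopologicalSpace E] [ContinuousAdd E] [ContinuousSMul ℝ E] [Preorder β] {f : E → β} {x₀ : E}
    (hmax : IsLocalMax f x₀) (w : E) : IsLocalMax (fun t : ℝ => f (x₀ + t • w)) 0 :=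
  IsLocalMax.comp_continuous (g := fun t : ℝ => x₀ + t • w) (by simpa using hmax) (by fun_prop)

section InvFourierIntegral

variable {V : Type*} [NormedAddCommGroup V] [InnerProductSpace ℝ V] [FiniteDimensional ℝ V]
  [MeasurableSpace V] [BorelSpace V]

/-- The inverse Fourier integral in the normalization of `BarronRep`, without factors of `2π`. -/
def invFourierIntegral (F : V → ℂ) (x : V) : ℂ :=
  ∫ ξ, F ξ * cexp (I * ⟪x, ξ⟫)

theorem integrable_mul_cexp_inner {F : V → ℂ} (hF : Integrable F) (x : V) :
    Integrable fun ξ => F ξ * cexp (I * ⟪x, ξ⟫) :=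
  hF.mul_bdd (c := 1) (by fun_prop) (Eventually.of_forall fun ξ => (norm_exp_I_mul_ofReal _).le)

theorem invFourierIntegral_add {F G : V → ℂ} (hF : Integrable F) (hG : Integrable G) (x : V) :
    invFourierIntegral (F + G) x = invFourierIntegral F x + invFourierIntegral G x := by
  simp only [invFourierIntegral, Pi.add_apply, add_mul]
  exact integral_add (integrable_mul_cexp_inner hF x) (integrable_mul_cexp_inner hG x)

theorem invFourierIntegral_const_mul (c : ℂ) (F : V → ℂ) (x : V) :
    invFourierIntegral (fun ξ => c * F ξ) x = c * invFourierIntegral F x := by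
  simp only [invFourierIntegral, mul_assoc, integral_const_mul]

theorem invFourierIntegral_finset_sum {ι : Type*} (s : Finset ι) {F : ι → V → ℂ}
    (hF : ∀ i ∈ s, Integrable (F i)) (x : V) :
    invFourierIntegral (fun ξ => ∑ i ∈ s, F i ξ) x = ∑ i ∈ s, invFourierIntegral (F i) x := by
  simp only [invFourierIntegral, Finset.sum_mul]
  exact integral_finsetSum s fun i hi => integrable_mul_cexp_inner (hF i hi) x

theorem continuous_invFourierIntegral {F : V → ℂ} (hF : Integrable F) :
    Continuous (invFourierIntegral F) :=
  continuous_of_dominated (fun x => (integrable_mul_cexp_inner hF x).aestronglyMeasurable)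
    (fun x => Eventually.of_forall fun ξ => by rw [norm_mul, norm_exp_I_mul_ofReal, mul_one])
    hF.norm (Eventually.of_forall fun ξ => by fun_prop)

theorem tendsto_invFourierIntegral_cocompact (F : V → ℂ) :
    Tendsto (invFourierIntegral F) (cocompact V) (𝓝 0) := by
  have hc : -(2 * Real.pi)⁻¹ ≠ 0 := by simp [Real.pi_ne_zero]
  have h := (tendsto_integral_exp_inner_smul_cocompact F).comp
    (Homeomorph.smulOfNeZero _ hc).toCocompactMap.cocompact_tendsto'
  refine h.congr fun x => integral_congr_ae (Eventually.of_forall fun ξ => ?_)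
  show 𝐞 (-⟪ξ, (-(2 * Real.pi)⁻¹) • x⟫) • F ξ = F ξ * cexp (I * ⟪x, ξ⟫)
  rw [real_inner_smul_right, real_inner_comm, Circle.smul_def, Real.fourierChar_apply, smul_eq_mul,
    mul_comm]
  congr 2
  push_cast
  field_simp

theorem integrable_inner_pow_mul {F : V → ℂ} (hF : AEStronglyMeasurable F) {n : ℕ}
    (h : Integrable fun ξ => ‖ξ‖ ^ n * ‖F ξ‖) (w : V) :
    Integrable fun ξ => (⟪w, ξ⟫ : ℂ) ^ n * F ξ := by
  refine (h.const_mul (‖w‖ ^ n)).mono' (by fun_prop) (Eventually.of_forall fun ξ => ?_)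
  rw [norm_mul, norm_pow, Complex.norm_real, ← mul_assoc, ← mul_pow]
  gcongr
  exact norm_inner_le_norm w ξ

theorem hasDerivAt_invFourierIntegral_add_smul {F : V → ℂ} (hF : Integrable F) {w : V}
    (hwF : Integrable fun ξ => (⟪w, ξ⟫ : ℂ) * F ξ) (x : V) (t : ℝ) :
    HasDerivAt (fun t : ℝ => invFourierIntegral F (x + t • w))
      (invFourierIntegral (fun ξ => I * ⟪w, ξ⟫ * F ξ) (x + t • w)) t := by
  have hderiv : ∀ (ξ : V) (t : ℝ), HasDerivAt (fun t : ℝ => F ξ * cexp (I * ⟪x + t • w, ξ⟫))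
      (I * ⟪w, ξ⟫ * F ξ * cexp (I * ⟪x + t • w, ξ⟫)) t := by
    intro ξ t
    simp only [inner_add_left, real_inner_smul_left]
    have h := ((((hasDerivAt_id t).mul_const ⟪w, ξ⟫).const_add ⟪x, ξ⟫).ofReal_comp.const_mul
      I).cexp.const_mul (F ξ)
    exact h.congr_deriv (by simp only [id, one_mul]; ring)
  refine (hasDerivAt_integral_of_dominated_loc_of_deriv_le (Metric.ball_mem_nhds t one_pos)
    (Eventually.of_forall fun t => (integrable_mul_cexp_inner hF _).aestronglyMeasurable)
    (integrable_mul_cexp_inner hF _) ?_ (bound := fun ξ => ‖(⟪w, ξ⟫ : ℂ) * F ξ‖) ?_ hwF.norm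
    (Eventually.of_forall fun ξ s _ => hderiv ξ s)).2
  · exact (integrable_mul_cexp_inner (hwF.const_mul I) (x + t • w)).aestronglyMeasurable.congr
      (Eventually.of_forall fun ξ => by simp only [mul_assoc])
  · refine Eventually.of_forall fun ξ s _ => ?_
    rw [norm_mul, norm_exp_I_mul_ofReal, mul_one, mul_assoc, norm_mul, Complex.norm_I, one_mul]

theorem invFourierIntegral_convolution {f g : V → ℂ} (hf : Integrable f) (hg : Integrable g)
    (x : V) : invFourierIntegral (f ⋆[ContinuousLinearMap.mul ℝ ℂ] g) x =
      invFourierIntegral f x * invFourierIntegral g x := by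
  have hint : Integrable (Function.uncurry fun ξ η => f η * g (ξ - η) * cexp (I * ⟪x, ξ⟫))
      (volume.prod volume) :=
    (hf.convolution_integrand (ContinuousLinearMap.mul ℝ ℂ) hg).mul_bdd (c := 1) (by fun_prop)
      (Eventually.of_forall fun p => (norm_exp_I_mul_ofReal _).le)
  have hshift : ∀ η, ∫ ξ, f η * g (ξ - η) * cexp (I * ⟪x, ξ⟫) =
      f η * cexp (I * ⟪x, η⟫) * invFourierIntegral g x := fun η => by
    have h := integral_sub_right_eq_self (μ := volume)
      (fun ζ => f η * g ζ * cexp (I * ⟪x, ζ + η⟫)) η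
    simp only [sub_add_cancel] at h
    rw [h, invFourierIntegral, ← integral_const_mul]
    refine integral_congr_ae (Eventually.of_forall fun ζ => ?_)
    simp only [inner_add_right, ofReal_add, mul_add, Complex.exp_add]
    ring
  simp only [invFourierIntegral, convolution_def, ContinuousLinearMap.mul_apply',
    ← integral_mul_const]
  rw [integral_integral_swap hint]
  exact integral_congr_ae (Eventually.of_forall hshift)

section LocalMax

variable {v : V → ℝ} {F : V → ℂ} {x₀ : V}

theorem hasDerivAt_add_smul_of_ofReal_eq (hvF : ∀ x, (v x : ℂ) = invFourierIntegral F x)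
    (hF : Integrable F) {w : V} (hwF : Integrable fun ξ => (⟪w, ξ⟫ : ℂ) * F ξ) (x : V) (t : ℝ) :
    HasDerivAt (fun t : ℝ => v (x + t • w))
      (invFourierIntegral (fun ξ => I * ⟪w, ξ⟫ * F ξ) (x + t • w)).re t := by
  simpa [Function.comp_def, ← hvF] using
    reCLM.hasFDerivAt.comp_hasDerivAt t (hasDerivAt_invFourierIntegral_add_smul hF hwF x t)

theorem re_invFourierIntegral_I_inner_mul_eq_zero {w : V}
    (hvF : ∀ x, (v x : ℂ) = invFourierIntegral F x) (hmax : IsLocalMax v x₀) (hF : Integrable F)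
    (hwF : Integrable fun ξ => (⟪w, ξ⟫ : ℂ) * F ξ) :
    (invFourierIntegral (fun ξ => I * ⟪w, ξ⟫ * F ξ) x₀).re = 0 := by
  simpa using (hmax.isLocalMax_add_smul w).hasDerivAt_eq_zero
    (hasDerivAt_add_smul_of_ofReal_eq hvF hF hwF x₀ 0)

theorem re_invFourierIntegral_inner_sq_mul_nonneg {w : V}
    (hvF : ∀ x, (v x : ℂ) = invFourierIntegral F x) (hmax : IsLocalMax v x₀) (hF : Integrable F)
    (hwF : Integrable fun ξ => (⟪w, ξ⟫ : ℂ) * F ξ)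
    (hwwF : Integrable fun ξ => (⟪w, ξ⟫ : ℂ) ^ 2 * F ξ) :
    0 ≤ (invFourierIntegral (fun ξ => (⟪w, ξ⟫ : ℂ) ^ 2 * F ξ) x₀).re := by
  have hwG : Integrable fun ξ => (⟪w, ξ⟫ : ℂ) * (I * ⟪w, ξ⟫ * F ξ) :=
    (hwwF.const_mul I).congr (Eventually.of_forall fun ξ => by ring)
  have h2 := reCLM.hasFDerivAt.comp_hasDerivAt 0 (hasDerivAt_invFourierIntegral_add_smul
    ((hwF.const_mul I).congr (Eventually.of_forall fun ξ => by ring)) hwG x₀ 0)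
  have hsecond := (hmax.isLocalMax_add_smul w).hasDerivAt_deriv_nonpos
    (Eventually.of_forall (hasDerivAt_add_smul_of_ofReal_eq hvF hF hwF x₀)) h2
  have hI : ∀ ξ, I * ⟪w, ξ⟫ * (I * ⟪w, ξ⟫ * F ξ) = -1 * ((⟪w, ξ⟫ : ℂ) ^ 2 * F ξ) := fun ξ => by
    linear_combination (⟪w, ξ⟫ : ℂ) ^ 2 * F ξ * I_sq
  simp only [zero_smul, add_zero, reCLM_apply, hI, invFourierIntegral_const_mul] at hsecond
  simpa using hsecond

theorem re_invFourierIntegral_norm_sq_mul_nonneg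
    (hvF : ∀ x, (v x : ℂ) = invFourierIntegral F x) (hmax : IsLocalMax v x₀) (hF : Integrable F)
    (h1 : Integrable fun ξ => ‖ξ‖ * ‖F ξ‖) (h2 : Integrable fun ξ => ‖ξ‖ ^ 2 * ‖F ξ‖) :
    0 ≤ (invFourierIntegral (fun ξ => ((‖ξ‖ ^ 2 : ℝ) : ℂ) * F ξ) x₀).re := by
  set b := stdOrthonormalBasis ℝ V
  have hw1 : ∀ i, Integrable fun ξ => (⟪b i, ξ⟫ : ℂ) * F ξ := fun i => by
    simpa using integrable_inner_pow_mul (n := 1) hF.aestronglyMeasurable (by simpa using h1) (b i)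
  have hw2 : ∀ i, Integrable fun ξ => (⟪b i, ξ⟫ : ℂ) ^ 2 * F ξ := fun i =>
    integrable_inner_pow_mul hF.aestronglyMeasurable h2 (b i)
  have hsum : (fun ξ => ((‖ξ‖ ^ 2 : ℝ) : ℂ) * F ξ) = fun ξ => ∑ i, (⟪b i, ξ⟫ : ℂ) ^ 2 * F ξ := by
    ext ξ
    rw [← b.sum_sq_inner_right ξ, ← Finset.sum_mul]
    push_cast
    rfl
  rw [hsum, invFourierIntegral_finset_sum _ fun i _ => hw2 i, re_sum]
  exact Finset.sum_nonneg fun i _ =>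
    re_invFourierIntegral_inner_sq_mul_nonneg hvF hmax hF (hw1 i) (hw2 i)

end LocalMax

end InvFourierIntegral

section Barron

variable {d : ℕ}

theorem muGradHat_eq_sum_convolution (M : Fin d → Ed d → ℂ) (Fv : Ed d → ℂ) (ξ : Ed d) :
    muGradHat d M Fv ξ =
      ∑ i, ((fun η : Ed d => I * (η i : ℂ) * Fv η) ⋆[ContinuousLinearMap.mul ℝ ℂ] M i) ξ := by
  simp only [muGradHat, convolution_def, ContinuousLinearMap.mul_apply', mul_comm (M _ _)]

theorem integrable_coord_mul {Fv : Ed d → ℂ} (hFv : AEStronglyMeasurable Fv)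
    (h1 : Integrable fun ξ => ‖ξ‖ * ‖Fv ξ‖) (i : Fin d) :
    Integrable fun η : Ed d => (η i : ℂ) * Fv η := by
  simpa only [pow_one, EuclideanSpace.basisFun_inner] using integrable_inner_pow_mul (n := 1) hFv
    (by simpa using h1) (EuclideanSpace.basisFun (Fin d) ℝ i)

theorem integrable_muGradHat {M : Fin d → Ed d → ℂ} {Fv : Ed d → ℂ}
    (hM : ∀ i, Integrable (M i)) (hFv : AEStronglyMeasurable Fv)
    (h1 : Integrable fun ξ => ‖ξ‖ * ‖Fv ξ‖) : Integrable (muGradHat d M Fv) := by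
  have hG : ∀ i, Integrable fun η : Ed d => I * (η i : ℂ) * Fv η := fun i => by
    simpa only [mul_assoc] using (integrable_coord_mul hFv h1 i).const_mul I
  simp only [funext (muGradHat_eq_sum_convolution M Fv)]
  exact integrable_finsetSum _ fun i _ => (hG i).integrable_convolution _ (hM i)

theorem muGradHat_neg (M : Fin d → Ed d → ℂ) (Fv : Ed d → ℂ) :
    muGradHat d M (-Fv) = -muGradHat d M Fv := by
  ext ξ
  simp [muGradHat, integral_neg]

namespace BarronRep

variable {s : ℝ} {f : Ed d → ℝ} {F : Ed d → ℂ}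

theorem ofReal_eq (hf : BarronRep d s f F) (x : Ed d) : (f x : ℂ) = invFourierIntegral F x :=
  hf.repr x

theorem eq_re (hf : BarronRep d s f F) : f = fun x => (invFourierIntegral F x).re :=
  funext fun x => by rw [← hf.ofReal_eq, ofReal_re]

theorem continuous (hf : BarronRep d s f F) : Continuous f := by
  rw [hf.eq_re]
  exact continuous_re.comp (continuous_invFourierIntegral hf.intF)

theorem tendsto_cocompact (hf : BarronRep d s f F) : Tendsto f (cocompact (Ed d)) (𝓝 0) := by
  rw [hf.eq_re]
  exact (continuous_re.tendsto 0).comp (tendsto_invFourierIntegral_cocompact F)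

theorem integrable_norm_mul (hf : BarronRep d s f F) (hs : 1 ≤ s) :
    Integrable fun ξ => ‖ξ‖ * ‖F ξ‖ := by
  refine hf.intW.mono' (continuous_norm.aestronglyMeasurable.mul hf.intF.norm.1)
    (Eventually.of_forall fun ξ => ?_)
  rw [norm_mul, norm_norm, norm_norm, mul_comm]
  gcongr
  calc ‖ξ‖ ≤ 1 + ‖ξ‖ := le_add_of_nonneg_left zero_le_one
    _ = (1 + ‖ξ‖) ^ (1 : ℝ) := (Real.rpow_one _).symm
    _ ≤ (1 + ‖ξ‖) ^ s := Real.rpow_le_rpow_of_exponent_le (by simp) hs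

theorem neg (hf : BarronRep d s f F) : BarronRep d s (-f) (-F) where
  intF := hf.intF.neg
  intW := by simpa using hf.intW
  repr x := by simp [hf.repr x, ← integral_neg]

end BarronRep

theorem re_invFourierIntegral_muGradHat_eq_zero {s t : ℝ} {μ : Fin d → Ed d → ℝ}
    {M : Fin d → Ed d → ℂ} {v : Ed d → ℝ} {Fv : Ed d → ℂ} {x₀ : Ed d}
    (hμ : ∀ i, BarronRep d t (μ i) (M i)) (hv : BarronRep d s v Fv)
    (h1 : Integrable fun ξ => ‖ξ‖ * ‖Fv ξ‖) (hmax : IsLocalMax v x₀) :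
    (invFourierIntegral (muGradHat d M Fv) x₀).re = 0 := by
  have hcoord := integrable_coord_mul hv.intF.aestronglyMeasurable h1
  have hG : ∀ i, Integrable fun η : Ed d => I * (η i : ℂ) * Fv η := fun i => by
    simpa only [mul_assoc] using (hcoord i).const_mul I
  have hcrit : ∀ i, (invFourierIntegral (fun η : Ed d => I * (η i : ℂ) * Fv η) x₀).re = 0 :=
    fun i => by
      simpa only [EuclideanSpace.basisFun_inner] using
        re_invFourierIntegral_I_inner_mul_eq_zero hv.ofReal_eq hmax hv.intF
          (w := EuclideanSpace.basisFun (Fin d) ℝ i)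
          (by simpa only [EuclideanSpace.basisFun_inner] using hcoord i)
  rw [funext (muGradHat_eq_sum_convolution M Fv), invFourierIntegral_finset_sum _
    fun i _ => (hG i).integrable_convolution _ (hμ i).intF, re_sum]
  refine Finset.sum_eq_zero fun i _ => ?_
  rw [invFourierIntegral_convolution (hG i) (hμ i).intF, ← (hμ i).ofReal_eq, re_mul_ofReal,
    hcrit i, zero_mul]

end Barron

theorem BarronRep.re_invFourierIntegral_resolvent_eq_zero {d : ℕ} {s γ : ℝ}
    {M : Fin d → Ed d → ℂ} {v : Ed d → ℝ} {Fv : Ed d → ℂ} (hv : BarronRep d s v Fv)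
    (hlap : Integrable fun ξ : Ed d => ((‖ξ‖ ^ 2 : ℝ) : ℂ) * Fv ξ)
    (hdrift : Integrable (muGradHat d M Fv))
    (heq : ∀ᵐ ξ : Ed d, ((γ + ‖ξ‖ ^ 2 : ℝ) : ℂ) * Fv ξ + muGradHat d M Fv ξ = 0) (x : Ed d) :
    γ * v x + (invFourierIntegral (fun ξ => ((‖ξ‖ ^ 2 : ℝ) : ℂ) * Fv ξ) x).re
      + (invFourierIntegral (muGradHat d M Fv) x).re = 0 := by
  have hzero : invFourierIntegral
      (fun ξ => ((γ + ‖ξ‖ ^ 2 : ℝ) : ℂ) * Fv ξ + muGradHat d M Fv ξ) x = 0 :=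
    integral_eq_zero_of_ae (heq.mono fun ξ h => by simp only [h, zero_mul, Pi.zero_apply])
  have hsum : (fun ξ => ((γ + ‖ξ‖ ^ 2 : ℝ) : ℂ) * Fv ξ + muGradHat d M Fv ξ) =
      (fun ξ => (γ : ℂ) * Fv ξ) + (fun ξ => ((‖ξ‖ ^ 2 : ℝ) : ℂ) * Fv ξ) + muGradHat d M Fv := by
    ext ξ
    simp only [Pi.add_apply]
    push_cast
    ring
  rw [hsum, invFourierIntegral_add ((hv.intF.const_mul _).add hlap) hdrift,
    invFourierIntegral_add (hv.intF.const_mul _) hlap, invFourierIntegral_const_mul,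
    ← hv.ofReal_eq] at hzero
  simpa using congrArg re hzero

theorem BarronRep.nonpos_of_resolvent_eq_zero {d : ℕ} {s t γ : ℝ} (hs : 1 ≤ s) (hγ : 0 < γ)
    {μ : Fin d → Ed d → ℝ} {M : Fin d → Ed d → ℂ} (hμ : ∀ i, BarronRep d t (μ i) (M i))
    {v : Ed d → ℝ} {Fv : Ed d → ℂ} (hv : BarronRep d s v Fv)
    (heq : ∀ᵐ ξ : Ed d, ((γ + ‖ξ‖ ^ 2 : ℝ) : ℂ) * Fv ξ + muGradHat d M Fv ξ = 0) (x : Ed d) :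
    v x ≤ 0 := by
  by_contra! hx
  obtain ⟨x₀, hx₀⟩ := hv.continuous.exists_forall_ge' x
    ((hv.tendsto_cocompact.eventually (gt_mem_nhds hx)).mono fun _ h => h.le)
  have hmax : IsLocalMax v x₀ := Eventually.of_forall hx₀
  have h1 := hv.integrable_norm_mul hs
  have hdrift := integrable_muGradHat (fun i => (hμ i).intF) hv.intF.aestronglyMeasurable h1
  have hres : Integrable fun ξ : Ed d => ((γ + ‖ξ‖ ^ 2 : ℝ) : ℂ) * Fv ξ :=
    hdrift.neg.congr (heq.mono fun ξ h => neg_eq_of_add_eq_zero_left h)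
  have hlap : Integrable fun ξ : Ed d => ((‖ξ‖ ^ 2 : ℝ) : ℂ) * Fv ξ :=
    (hres.sub (hv.intF.const_mul γ)).congr (ae_of_all _ fun ξ => by
      simp only [Pi.sub_apply]
      push_cast
      ring)
  have hsplit := hv.re_invFourierIntegral_resolvent_eq_zero hlap hdrift heq x₀
  have hlap_nonneg := re_invFourierIntegral_norm_sq_mul_nonneg hv.ofReal_eq hmax hv.intF h1
    (by simpa using hlap.norm)
  rw [re_invFourierIntegral_muGradHat_eq_zero hμ hv h1 hmax] at hsplit
  linarith [mul_pos hγ (hx.trans_le (hx₀ x))]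

/-- for `s ≥ 1`, `γ > 0`, `μ` with components in `B^{s-1}(ℝ^d)`, any `v ∈ B^s(ℝ^d)`
satisfying `γv - Δv + μ·∇v = 0` on `ℝ^d` (on the Fourier side:
`(γ+|ξ|²) v̂(ξ) + (μ·∇v)^(ξ) = 0` a.e.) vanishes identically. -/
theorem injective_resolvent (d : ℕ) (s γ : ℝ) (hs : 1 ≤ s) (hγ : 0 < γ)
    (μ : Fin d → Ed d → ℝ) (M : Fin d → Ed d → ℂ)
    (hμ : ∀ i, BarronRep d (s - 1) (μ i) (M i))
    (v : Ed d → ℝ) (Fv : Ed d → ℂ) (hv : BarronRep d s v Fv)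
    (heq : ∀ᵐ ξ : Ed d, ((γ + ‖ξ‖ ^ 2 : ℝ) : ℂ) * Fv ξ + muGradHat d M Fv ξ = 0) :
    ∀ x, v x = 0 := by
  have heq_neg : ∀ᵐ ξ : Ed d, ((γ + ‖ξ‖ ^ 2 : ℝ) : ℂ) * (-Fv) ξ + muGradHat d M (-Fv) ξ = 0 :=
    heq.mono fun ξ h => by
      rw [muGradHat_neg, Pi.neg_apply, Pi.neg_apply]
      linear_combination -h
  intro x
  exact le_antisymm (hv.nonpos_of_resolvent_eq_zero hs hγ hμ heq x)
    (neg_nonpos.mp (hv.neg.nonpos_of_resolvent_eq_zero hs hγ hμ heq_neg x))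

end
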